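/- Let q be an odd prime power. In PG(2,q) with Q(x) = x_1^2 − x_0 x_2, the matrix A_12 over F_2, with rows indexed by the polar lines of anisotropic points and columns indexed by absolute (isotropic) points (entry 1 iff incident), has 2-rank exactly q. -/

import Mathlib

/-- The quadratic form `Q(x₀,x₁,x₂) = x₁² - x₀x₂` on `F³`. -/
def Qc (F : Type) [Field F] (v : Fin 3 → F) : F := v 1 ^ 2 - v 0 * v 2

/-- The bilinear form associated to `Qc`. -/
def Bc (F : Type) [Field F] (x y : Fin 3 → F) : F :=
  (2 : F)⁻¹ * (Qc F (x + y) - Qc F x - Qc F y)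

/-- A point of `PG(2,q)` is absolute if `Q` vanishes on it. -/
def Absolute (F : Type) [Field F] (P : Projectivization F (Fin 3 → F)) : Prop :=
  Qc F P.rep = 0

/-- A point of `PG(2,q)` is external if `Q` takes a nonzero square value on it. -/
def External (F : Type) [Field F] (P : Projectivization F (Fin 3 → F)) : Prop :=
  IsSquare (Qc F P.rep) ∧ Qc F P.rep ≠ 0

/-- A point of `PG(2,q)` is internal if `Q` takes a non-square value on it. -/
def Internal (F : Type) [Field F] (P : Projectivization F (Fin 3 → F)) : Prop :=
  ¬ IsSquare (Qc F P.rep)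

/-- Lines of `PG(2,q)` are the 2-dimensional subspaces of `F³`. -/
def IsLine (F : Type) [Field F] (L : Submodule F (Fin 3 → F)) : Prop :=
  Module.finrank F ↥L = 2

/-- The number of absolute points on a line. -/
noncomputable def nAbs (F : Type) [Field F] (L : Submodule F (Fin 3 → F)) : ℕ :=
  Nat.card {P : Projectivization F (Fin 3 → F) // Absolute F P ∧ P.submodule ≤ L}

open Classical in
/-- Indicator of a proposition in `F₂`. -/
noncomputable def ind (p : Prop) : ZMod 2 := if p then 1 else 0

/-! The absolute points are the points `(1 : t : t²)` and `(0 : 0 : 1)` of the conic, `q + 1` in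
all. The polar line of an anisotropic point `x` meets the conic in `0` or `2` points: for `x₀ ≠ 0`
these are the roots of a quadratic with discriminant `4 Q(x) ≠ 0`, and for `x₀ = 0` they are
`(0 : 0 : 1)` and one affine point. So every row of `A₁₂` has even weight, the all-ones vector
lies in its kernel and the rank is at most `q`. Conversely, the polar line of `(0 : 1 : 2t)` is
the secant through `(0 : 0 : 1)` and `(1 : t : t²)`, so these `q` rows restricted to the columns
`(1 : s : s²)` form an identity matrix. -/

open Finset Matrix
open Projectivization (mk mk_eq_mk_iff mk_eq_mk_iff' exists_smul_eq_mk_rep)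

lemma Matrix.rank_lt_card_width_of_mulVec_eq_zero {K m n : Type*} [Field K] [Fintype n]
    (A : Matrix m n K) {v : n → K} (hv : v ≠ 0) (hAv : A *ᵥ v = 0) :
    A.rank < Fintype.card n := by
  have hker : LinearMap.ker A.mulVecLin ≠ ⊥ := fun h =>
    hv (LinearMap.ker_eq_bot'.mp h v hAv)
  have hpos : 0 < Module.finrank K (LinearMap.ker A.mulVecLin) :=
    Nat.pos_of_ne_zero (mt Submodule.finrank_eq_zero.mp hker)
  have hsum := LinearMap.finrank_range_add_finrank_ker A.mulVecLin
  rw [Module.finrank_fintype_fun_eq_card] at hsum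
  rw [Matrix.rank]
  omega

lemma even_card_roots_quadratic {K : Type*} [Field K] [Fintype K] [DecidableEq K]
    [NeZero (2 : K)] {a b c : K} (ha : a ≠ 0) (hd : discrim a b c ≠ 0) :
    Even #{x | a * (x * x) + b * x + c = 0} := by
  by_cases hroot : ∃ x, a * (x * x) + b * x + c = 0
  · obtain ⟨x₀, hx₀⟩ := hroot
    set s := 2 * a * x₀ + b
    have hs : discrim a b c = s * s := by rw [discrim_eq_sq_of_quadratic_eq_zero hx₀, sq]
    have hs0 : s ≠ 0 := fun h => hd (by rw [hs, h, mul_zero])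
    have hne : (-b + s) / (2 * a) ≠ (-b - s) / (2 * a) := by
      intro h
      rw [div_left_inj' (mul_ne_zero two_ne_zero ha)] at h
      exact hs0 ((mul_eq_zero.mp (by linear_combination h : 2 * s = 0)).resolve_left two_ne_zero)
    have hroots : ({x | a * (x * x) + b * x + c = 0} : Finset K)
        = {(-b + s) / (2 * a), (-b - s) / (2 * a)} := by
      ext x
      simp [quadratic_eq_zero_iff ha hs]
    rw [hroots, card_pair hne]
    exact even_two
  · simp [not_exists.mp hroot]

open Classical in
lemma sum_ind {α : Type*} [Fintype α] (p : α → Prop) :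
    ∑ a : α, ind (p a) = (#{a | p a} : ZMod 2) := by
  simp only [ind, sum_boole]

section

variable {F : Type} [Field F]

lemma Qc_smul (a : F) (v : Fin 3 → F) : Qc F (a • v) = a ^ 2 * Qc F v := by
  simp only [Qc, Pi.smul_apply, smul_eq_mul]
  ring

lemma Bc_eq (x y : Fin 3 → F) :
    Bc F x y = 2⁻¹ * (2 * x 1 * y 1 - x 0 * y 2 - x 2 * y 0) := by
  simp only [Bc, Qc, Pi.add_apply]
  ring

lemma Bc_comm (x y : Fin 3 → F) : Bc F x y = Bc F y x := by
  simp only [Bc_eq]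
  ring

lemma Bc_smul_left (a : F) (x y : Fin 3 → F) : Bc F (a • x) y = a * Bc F x y := by
  simp only [Bc_eq, Pi.smul_apply, smul_eq_mul]
  ring

lemma Qc_rep_mk_eq_zero_iff {v : Fin 3 → F} (hv : v ≠ 0) :
    Qc F (mk F v hv).rep = 0 ↔ Qc F v = 0 := by
  obtain ⟨a, ha⟩ := exists_smul_eq_mk_rep F v hv
  simp [← ha, Units.smul_def, Qc_smul]

lemma Bc_rep_mk_eq_zero_iff {v : Fin 3 → F} (hv : v ≠ 0) (y : Fin 3 → F) :
    Bc F (mk F v hv).rep y = 0 ↔ Bc F v y = 0 := by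
  obtain ⟨a, ha⟩ := exists_smul_eq_mk_rep F v hv
  simp [← ha, Units.smul_def, Bc_smul_left]

variable (F) in
def conicVec : Option F → Fin 3 → F
  | none => ![0, 0, 1]
  | some t => ![1, t, t ^ 2]

lemma conicVec_ne_zero (o : Option F) : conicVec F o ≠ 0 := by
  cases o with
  | none => exact fun h => by simpa [conicVec] using congrFun h 2
  | some t => exact fun h => by simpa [conicVec] using congrFun h 0

lemma Qc_conicVec (o : Option F) : Qc F (conicVec F o) = 0 := by
  cases o <;> simp [conicVec, Qc]

lemma exists_smul_conicVec_eq {v : Fin 3 → F} (hQ : Qc F v = 0) :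
    ∃ (o : Option F) (a : F), a • conicVec F o = v := by
  have hQ' : v 1 ^ 2 = v 0 * v 2 := sub_eq_zero.mp hQ
  by_cases h0 : v 0 = 0
  · have h1 : v 1 = 0 := by simpa [h0] using hQ'
    refine ⟨none, v 2, ?_⟩
    ext i
    fin_cases i <;> simp [conicVec, h0, h1]
  · refine ⟨some (v 1 / v 0), v 0, ?_⟩
    ext i
    fin_cases i <;> simp [conicVec]
    · field_simp
    · rw [div_pow, hQ']
      field_simp

variable (F) in
noncomputable def conicPoint (o : Option F) : Projectivization F (Fin 3 → F) :=
  mk F (conicVec F o) (conicVec_ne_zero o)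

lemma absolute_conicPoint (o : Option F) : Absolute F (conicPoint F o) :=
  (Qc_rep_mk_eq_zero_iff _).mpr (Qc_conicVec o)

lemma conicPoint_injective : Function.Injective (conicPoint F) := by
  intro o o' h
  obtain ⟨a, ha⟩ := (mk_eq_mk_iff _ _ _ _ _).mp h
  have h0 := congrFun ha 0
  have h1 := congrFun ha 1
  cases o <;> cases o' <;> simp_all [conicVec, Units.smul_def]

lemma exists_conicPoint_eq {P : Projectivization F (Fin 3 → F)} (hP : Absolute F P) :
    ∃ o, conicPoint F o = P := by
  obtain ⟨o, a, ha⟩ := exists_smul_conicVec_eq hP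
  exact ⟨o, by rw [← P.mk_rep]; exact ((mk_eq_mk_iff' _ _ _ _ _).mpr ⟨a, ha⟩).symm⟩

variable (F) in
noncomputable def conicEquiv : Option F ≃ {P : Projectivization F (Fin 3 → F) // Absolute F P} :=
  Equiv.ofBijective (fun o => ⟨conicPoint F o, absolute_conicPoint o⟩)
    ⟨fun _ _ h => conicPoint_injective (congrArg Subtype.val h),
      fun P => (exists_conicPoint_eq P.2).imp fun _ h => Subtype.ext h⟩

@[simp]
lemma coe_conicEquiv (o : Option F) : (conicEquiv F o : Projectivization F (Fin 3 → F)) =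
    conicPoint F o :=
  rfl

lemma Bc_rep_conicPoint_eq_zero_iff (x : Fin 3 → F) (o : Option F) :
    Bc F x (conicPoint F o).rep = 0 ↔ Bc F x (conicVec F o) = 0 := by
  rw [Bc_comm, conicPoint, Bc_rep_mk_eq_zero_iff, Bc_comm]

lemma card_absolute [Fintype F] [Fintype {P : Projectivization F (Fin 3 → F) // Absolute F P}] :
    Fintype.card {P : Projectivization F (Fin 3 → F) // Absolute F P} = Fintype.card F + 1 := by
  rw [← Fintype.card_congr (conicEquiv F), Fintype.card_option]

lemma discrim_polar (x : Fin 3 → F) : discrim (x 0) (-2 * x 1) (x 2) = 2 ^ 2 * Qc F x := by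
  simp only [discrim, Qc]
  ring

section OddCharacteristic

variable [NeZero (2 : F)]

lemma Bc_conicVec_none_eq_zero_iff (x : Fin 3 → F) :
    Bc F x (conicVec F none) = 0 ↔ x 0 = 0 := by
  simp [Bc_eq, conicVec, two_ne_zero]

lemma Bc_conicVec_some_eq_zero_iff (x : Fin 3 → F) (t : F) :
    Bc F x (conicVec F (some t)) = 0 ↔ x 0 * (t * t) + -2 * x 1 * t + x 2 = 0 := by
  simp only [Bc_eq, conicVec, mul_eq_zero, inv_eq_zero, two_ne_zero, false_or, Fin.isValue,
    cons_val_one, cons_val_zero, Matrix.cons_val, mul_one, neg_mul]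
  constructor <;> intro h <;> linear_combination -h

lemma sum_ind_polar_conicVec [Fintype F] {x : Fin 3 → F} (hx : Qc F x ≠ 0) :
    ∑ o : Option F, ind (Bc F x (conicVec F o) = 0) = 0 := by
  classical
  rw [Fintype.sum_option]
  simp only [Bc_conicVec_none_eq_zero_iff, Bc_conicVec_some_eq_zero_iff, sum_ind]
  by_cases h0 : x 0 = 0
  · have h1 : x 1 ≠ 0 := fun h1 => hx (by simp [Qc, h0, h1])
    have hroot : ({t | x 0 * (t * t) + -2 * x 1 * t + x 2 = 0} : Finset F)
        = {x 2 / (2 * x 1)} := by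
      ext t
      simp only [mem_filter_univ, mem_singleton, h0]
      constructor <;> intro h
      · field_simp
        linear_combination -h
      · rw [h]
        field_simp
        ring
    rw [hroot, card_singleton]
    simp [ind, h0]
    rfl
  · have hd : discrim (x 0) (-2 * x 1) (x 2) ≠ 0 := by
      rw [discrim_polar]
      exact mul_ne_zero (pow_ne_zero 2 two_ne_zero) hx
    rw [ZMod.natCast_eq_zero_iff_even.mpr (even_card_roots_quadratic h0 hd)]
    simp [ind, h0]

end OddCharacteristic

lemma neZero_two_of_odd_card [Fintype F] (h : Odd (Fintype.card F)) : NeZero (2 : F) :=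
  ⟨Ring.two_ne_zero fun hchar => by
    simpa [Nat.odd_iff.mp h] using FiniteField.even_card_of_char_two hchar⟩

lemma sum_ind_polar_absolute [NeZero (2 : F)] [Fintype F]
    [Fintype {P : Projectivization F (Fin 3 → F) // Absolute F P}]
    {x : Fin 3 → F} (hx : Qc F x ≠ 0) :
    ∑ R : {P : Projectivization F (Fin 3 → F) // Absolute F P}, ind (Bc F x R.1.rep = 0) = 0 := by
  rw [← (conicEquiv F).sum_comp]
  simpa only [coe_conicEquiv, Bc_rep_conicPoint_eq_zero_iff]
    using sum_ind_polar_conicVec hx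

variable (F) in
def secantPoleVec (t : F) : Fin 3 → F := ![0, 1, 2 * t]

lemma Qc_secantPoleVec (t : F) : Qc F (secantPoleVec F t) = 1 := by
  simp [Qc, secantPoleVec]

variable (F) in
noncomputable def secantPole (t : F) : {P : Projectivization F (Fin 3 → F) // Qc F P.rep ≠ 0} :=
  ⟨mk F (secantPoleVec F t) (fun h => by simpa [secantPoleVec] using congrFun h 1),
    (Qc_rep_mk_eq_zero_iff _).not.mpr (by simp [Qc_secantPoleVec])⟩

lemma Bc_secantPoleVec_conicVec [NeZero (2 : F)] (t s : F) :
    Bc F (secantPoleVec F t) (conicVec F (some s)) = s - t := by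
  simp only [secantPoleVec, conicVec, Bc_eq, Fin.isValue, cons_val_one, cons_val_zero, mul_one,
    Matrix.cons_val, zero_mul, sub_zero]
  field_simp

lemma Bc_rep_secantPole_conicPoint_eq_zero_iff [NeZero (2 : F)] (t s : F) :
    Bc F (secantPole F t).1.rep (conicPoint F (some s)).rep = 0 ↔ t = s := by
  rw [Bc_rep_conicPoint_eq_zero_iff, secantPole, Bc_rep_mk_eq_zero_iff, Bc_secantPoleVec_conicVec,
    sub_eq_zero, eq_comm]

end

/-- The matrix `A₁₂` over `F₂`, with rows indexed by the polar lines of the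
anisotropic points of `PG(2,q)` and columns by the absolute points (entry `1` iff
incident, i.e. `⟨P,R⟩ = 0`), has 2-rank exactly `q`. -/
theorem stmt19 (F : Type) [Field F] [Fintype F] (q : ℕ)
    (hq : Fintype.card F = q) (hodd : Odd q)
    [Fintype {P : Projectivization F (Fin 3 → F) // Qc F P.rep ≠ 0}]
    [Fintype {P : Projectivization F (Fin 3 → F) // Absolute F P}] :
    (Matrix.of fun (P : {P : Projectivization F (Fin 3 → F) // Qc F P.rep ≠ 0})
        (R : {P : Projectivization F (Fin 3 → F) // Absolute F P}) =>
        ind (Bc F P.1.rep R.1.rep = 0)).rank = q := by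
  classical
  have := neZero_two_of_odd_card (hq ▸ hodd)
  set A := Matrix.of fun (P : {P : Projectivization F (Fin 3 → F) // Qc F P.rep ≠ 0})
    (R : {P : Projectivization F (Fin 3 → F) // Absolute F P}) => ind (Bc F P.1.rep R.1.rep = 0)
  have : Nonempty {P : Projectivization F (Fin 3 → F) // Absolute F P} := ⟨conicEquiv F none⟩
  have hrows : A *ᵥ 1 = 0 := funext fun P => by
    simpa [A, mulVec, dotProduct] using sum_ind_polar_absolute P.2
  have hsecants : A.submatrix (secantPole F) (fun t => conicEquiv F (some t)) = 1 := by
    ext t s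
    simp [A, ind, one_apply, Bc_rep_secantPole_conicPoint_eq_zero_iff]
  apply le_antisymm
  · have := A.rank_lt_card_width_of_mulVec_eq_zero one_ne_zero hrows
    rw [card_absolute, hq] at this
    omega
  · calc q = (1 : Matrix F F (ZMod 2)).rank := by rw [rank_one, hq]
      _ ≤ A.rank := hsecants ▸ rank_submatrix_le A _ _
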